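/- arXiv:1406.1790 — 6 statements merged into one kernel-verified Lean document; each statement's English description precedes it below -/
import Mathlib

section
/- For positive integers n and j ≤ n/2 and any p ∈ (0,1), if j > pn then C(n,j)·p^j·(1−p)^{n−j} < exp(−((j−pn)² − 2)/(2j)). -/
/-!
Put `q = j / n`. The binomial weight `C(n,j) q^j (1-q)^(n-j)` is one term of `(q + (1-q))^n = 1`,
and moving the parameter from `q` to `p` multiplies `q^j (1-q)^(n-j)` by `exp (-n D(q ‖ p))`,
where `D` is the Kullback–Leibler divergence of Bernoulli laws. For `p ≤ q` the expansion
`log (1 - x) ≤ -x - x^2/2` gives `D(q ‖ p) ≥ (q-p)^2 / (2q)`, and `n (q-p)^2 / (2q) = (j-pn)^2 / (2j)`.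
-/

open Real

lemma log_one_sub_le_neg_sub_sq_div_two {x : ℝ} (hx0 : 0 ≤ x) (hx1 : x < 1) :
    log (1 - x) ≤ -x - x ^ 2 / 2 := by
  have hseries := hasSum_pow_div_log_of_abs_lt_one (abs_lt.2 ⟨by linarith, hx1⟩)
  have hpartial : x + x ^ 2 / 2 ≤ -log (1 - x) := by
    simpa [Finset.sum_range_succ, one_add_one_eq_two] using
      sum_le_hasSum (Finset.range 2) (fun i _ => by positivity) hseries
  linarith

lemma choose_mul_pow_mul_one_sub_pow_le_one (n j : ℕ) {q : ℝ} (hq0 : 0 ≤ q) (hq1 : q ≤ 1) :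
    (n.choose j : ℝ) * q ^ j * (1 - q) ^ (n - j) ≤ 1 := by
  rcases le_or_gt j n with hjn | hnj
  · have hq1' : 0 ≤ 1 - q := by linarith
    have hterm_le := Finset.single_le_sum
      (f := fun k => q ^ k * (1 - q) ^ (n - k) * (n.choose k : ℝ))
      (fun k _ => by positivity) (Finset.mem_range.2 (Nat.lt_succ_of_le hjn))
    rw [← add_pow, add_sub_cancel, one_pow] at hterm_le
    linarith
  · simp [Nat.choose_eq_zero_of_lt hnj]

/-- `D(Bernoulli q ‖ Bernoulli p)`. -/
noncomputable def bernoulliKL (q p : ℝ) : ℝ :=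
  q * log (q / p) + (1 - q) * log ((1 - q) / (1 - p))

lemma sq_sub_div_two_mul_le_bernoulliKL {p q : ℝ} (hp : 0 < p) (hpq : p ≤ q) (hq : q < 1) :
    (q - p) ^ 2 / (2 * q) ≤ bernoulliKL q p := by
  have hq0 : 0 < q := hp.trans_le hpq
  have hq1 : 0 < 1 - q := by linarith
  have hlog_left : log (p / q) ≤ -((q - p) / q) - ((q - p) / q) ^ 2 / 2 := by
    rw [show p / q = 1 - (q - p) / q by field_simp; ring]
    exact log_one_sub_le_neg_sub_sq_div_two (by positivity) (by rw [div_lt_one hq0]; linarith)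
  have hlog_right : log ((1 - p) / (1 - q)) ≤ (1 - p) / (1 - q) - 1 :=
    log_le_sub_one_of_pos (div_pos (by linarith) hq1)
  have hleft := mul_le_mul_of_nonneg_left hlog_left hq0.le
  have hright := mul_le_mul_of_nonneg_left hlog_right hq1.le
  have hkl : bernoulliKL q p = -(q * log (p / q)) - (1 - q) * log ((1 - p) / (1 - q)) := by
    rw [bernoulliKL, ← inv_div p q, log_inv, ← inv_div (1 - p), log_inv]
    ring
  have hbound : q * (-((q - p) / q) - ((q - p) / q) ^ 2 / 2) + (1 - q) * ((1 - p) / (1 - q) - 1)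
      = -((q - p) ^ 2 / (2 * q)) := by
    field_simp [hq1.ne']
    ring
  linarith

lemma pow_mul_one_sub_pow_eq_mul_exp {p q : ℝ} (hp0 : 0 < p) (hp1 : p < 1) (hq0 : 0 < q)
    (hq1 : q < 1) (j m : ℕ) :
    p ^ j * (1 - p) ^ m =
      q ^ j * (1 - q) ^ m * exp (-(j * log (q / p) + m * log ((1 - q) / (1 - p)))) := by
  have hp1' : 0 < 1 - p := by linarith
  have hq1' : 0 < 1 - q := by linarith
  rw [neg_add, exp_add, ← mul_neg, ← mul_neg, exp_nat_mul, exp_nat_mul, exp_neg, exp_neg,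
    exp_log (by positivity), exp_log (by positivity), inv_div, inv_div, mul_mul_mul_comm,
    ← mul_pow, ← mul_pow, mul_div_cancel₀ _ hq0.ne', mul_div_cancel₀ _ hq1'.ne']

lemma mul_bernoulliKL_div {n j : ℕ} (hjn : j ≤ n) (hn : (n : ℝ) ≠ 0) (p : ℝ) :
    n * bernoulliKL (j / n) p =
      j * log ((j / n) / p) + ((n - j : ℕ) : ℝ) * log ((1 - j / n) / (1 - p)) := by
  rw [bernoulliKL, Nat.cast_sub hjn]
  field_simp

theorem binom_coeff_upper_bound_general (n j : ℕ)
    (hjn : (j : ℝ) ≤ n / 2) (p : ℝ) (hp : p ∈ Set.Ioo (0 : ℝ) 1)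
    (hjpn : (j : ℝ) > p * n) :
    (n.choose j : ℝ) * p ^ j * (1 - p) ^ (n - j) <
      Real.exp (-((((j : ℝ) - p * n) ^ 2 - 2) / (2 * j))) := by
  obtain ⟨hp0, hp1⟩ := hp
  have hj : (0 : ℝ) < j := lt_of_le_of_lt (by positivity) hjpn
  have hn : (0 : ℝ) < n := by linarith
  have hjn' : j ≤ n := by exact_mod_cast (by linarith : (j : ℝ) ≤ n)
  set q : ℝ := j / n with hq
  have hq0 : 0 < q := by positivity
  have hq1 : q < 1 := (div_lt_one hn).2 (by linarith)
  have hpq : p ≤ q := by rw [hq, le_div_iff₀ hn]; linarith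
  have hexponent : n * ((q - p) ^ 2 / (2 * q)) = ((j : ℝ) - p * n) ^ 2 / (2 * j) := by
    rw [hq]; field_simp
  calc (n.choose j : ℝ) * p ^ j * (1 - p) ^ (n - j)
      = (n.choose j : ℝ) * q ^ j * (1 - q) ^ (n - j) * exp (-(n * bernoulliKL q p)) := by
        rw [mul_assoc, pow_mul_one_sub_pow_eq_mul_exp hp0 hp1 hq0 hq1,
          mul_bernoulliKL_div hjn' hn.ne', ← hq]
        ring
    _ ≤ exp (-(n * bernoulliKL q p)) :=
        mul_le_of_le_one_left (exp_pos _).le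
          (choose_mul_pow_mul_one_sub_pow_le_one n j hq0.le hq1.le)
    _ ≤ exp (-(((j : ℝ) - p * n) ^ 2 / (2 * j))) := by
        rw [exp_le_exp, neg_le_neg_iff, ← hexponent]
        exact mul_le_mul_of_nonneg_left (sq_sub_div_two_mul_le_bernoulliKL hp0 hpq hq1) hn.le
    _ < exp (-((((j : ℝ) - p * n) ^ 2 - 2) / (2 * j))) := by
        rw [exp_lt_exp, neg_lt_neg_iff]
        gcongr
        linarith

theorem binom_coeff_upper_bound (n j : ℕ) (hn : 0 < n) (hj : 0 < j)
    (hjn : (j : ℝ) ≤ n / 2) (p : ℝ) (hp : p ∈ Set.Ioo (0 : ℝ) 1)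
    (hjpn : (j : ℝ) > p * n) :
    (n.choose j : ℝ) * p ^ j * (1 - p) ^ (n - j) <
      Real.exp (-((((j : ℝ) - p * n) ^ 2 - 2) / (2 * j))) :=
  binom_coeff_upper_bound_general n j hjn p hp hjpn
end

section
/- For positive integers j with pn < j and p ∈ (0,1), ∑_{k=j}^{n} C(n,k)·p^k·(1−p)^{n−k} ≤ C(n,j)·p^j·(1−p)^{n−j} · (1 + 1/s), where s = (j−pn)/(j−pj). -/
/-!
For `k ≥ j` the ratio of consecutive binomial terms `x_k` is
`(n - k) p / ((k + 1)(1 - p)) ≤ (n - j) p / (j (1 - p)) = 1 - s`, so the tail from `j` is dominated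
by a geometric series with ratio `1 - s` and sums to at most `x_j / s ≤ x_j (1 + 1 / s)`.
-/
open Finset

section
variable {K : Type*} [Field K] [LinearOrder K] [IsStrictOrderedRing K]

theorem le_mul_pow_of_succ_le_mul {f : ℕ → K} {ρ : K} {j n : ℕ} (hρ : 0 ≤ ρ)
    (hf : ∀ k, j ≤ k → k < n → f (k + 1) ≤ ρ * f k) {i : ℕ} (hi : j + i ≤ n) :
    f (j + i) ≤ f j * ρ ^ i := by
  induction i with
  | zero => simp
  | succ i ih =>
    calc f (j + (i + 1)) = f (j + i + 1) := rfl
      _ ≤ ρ * f (j + i) := hf _ (by omega) (by omega)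
      _ ≤ ρ * (f j * ρ ^ i) := mul_le_mul_of_nonneg_left (ih (by omega)) hρ
      _ = f j * ρ ^ (i + 1) := by ring

theorem sum_Icc_le_div_one_sub_of_succ_le_mul {f : ℕ → K} {ρ : K} {j n : ℕ} (hρ0 : 0 ≤ ρ)
    (hρ1 : ρ < 1) (hfj : 0 ≤ f j) (hf : ∀ k, j ≤ k → k < n → f (k + 1) ≤ ρ * f k) :
    ∑ k ∈ Icc j n, f k ≤ f j / (1 - ρ) := by
  calc ∑ k ∈ Icc j n, f k = ∑ i ∈ range (n + 1 - j), f (j + i) := by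
        rw [← Ico_add_one_right_eq_Icc, sum_Ico_eq_sum_range]
    _ ≤ ∑ i ∈ range (n + 1 - j), f j * ρ ^ i :=
        sum_le_sum fun i hi => le_mul_pow_of_succ_le_mul hρ0 hf (by simp at hi; omega)
    _ = f j * ∑ i ∈ Ico 0 (n + 1 - j), ρ ^ i := by rw [← mul_sum, range_eq_Ico]
    _ ≤ f j * (ρ ^ 0 / (1 - ρ)) :=
        mul_le_mul_of_nonneg_left (geom_sum_Ico_le_of_lt_one hρ0 hρ1) hfj
    _ = f j / (1 - ρ) := by ring

end

def binomialTerm (n : ℕ) (p : ℝ) (k : ℕ) : ℝ :=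
  n.choose k * p ^ k * (1 - p) ^ (n - k)

theorem binomialTerm_nonneg {n : ℕ} {p : ℝ} (hp0 : 0 ≤ p) (hp1 : p ≤ 1) (k : ℕ) :
    0 ≤ binomialTerm n p k := by
  have : 0 ≤ 1 - p := by linarith
  unfold binomialTerm; positivity

theorem binomialTerm_succ_mul {n k : ℕ} (p : ℝ) (hk : k < n) :
    binomialTerm n p (k + 1) * ((k + 1) * (1 - p)) = (n - k) * p * binomialTerm n p k := by
  have hchoose : (n.choose (k + 1) : ℝ) * (k + 1) = n.choose k * (n - k) := by
    rw [← Nat.cast_sub hk.le]; exact_mod_cast Nat.choose_succ_right_eq n k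
  have hnk : n - k = n - (k + 1) + 1 := by omega
  unfold binomialTerm
  rw [hnk]
  linear_combination p ^ (k + 1) * (1 - p) ^ (n - (k + 1) + 1) * hchoose

theorem binomialTerm_succ_le {n j k : ℕ} {p : ℝ} (hp0 : 0 ≤ p) (hp1 : p < 1) (hj : 0 < j)
    (hjk : j ≤ k) (hk : k < n) :
    binomialTerm n p (k + 1) ≤ (n - j) * p / (j * (1 - p)) * binomialTerm n p k := by
  have hq : 0 < 1 - p := by linarith
  have hjk' : (j : ℝ) ≤ k := by exact_mod_cast hjk
  have hx := binomialTerm_nonneg (n := n) hp0 hp1.le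
  rw [div_mul_eq_mul_div, le_div_iff₀ (by positivity)]
  calc binomialTerm n p (k + 1) * (j * (1 - p))
      ≤ binomialTerm n p (k + 1) * ((k + 1) * (1 - p)) := by gcongr; exacts [hx _, by linarith]
    _ = (n - k) * p * binomialTerm n p k := binomialTerm_succ_mul p hk
    _ ≤ (n - j) * p * binomialTerm n p k := by gcongr; exact hx _

theorem binomial_tail_geometric_bound_general (n j : ℕ) (p : ℝ)
    (hp : p ∈ Set.Ioo (0 : ℝ) 1) (hjn : j ≤ n)
    (hpnj : p * n < j) (s : ℝ) (hs : s = ((j : ℝ) - p * n) / ((j : ℝ) - p * j)) :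
    ∑ k ∈ Finset.Icc j n, (n.choose k : ℝ) * p ^ k * (1 - p) ^ (n - k) ≤
      (n.choose j : ℝ) * p ^ j * (1 - p) ^ (n - j) * (1 + 1 / s) := by
  obtain ⟨hp0, hp1⟩ := hp
  have hj : 0 < j := by exact_mod_cast (mul_nonneg hp0.le (Nat.cast_nonneg n)).trans_lt hpnj
  have hjn' : (j : ℝ) ≤ n := by exact_mod_cast hjn
  have hq : 0 < 1 - p := by linarith
  have hs0 : 0 < s := by
    rw [hs]; apply div_pos <;> nlinarith
  have hρ : (n - j) * p / (j * (1 - p)) = 1 - s := by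
    rw [hs]; field_simp; ring
  have hρ0 : 0 ≤ 1 - s := by
    rw [← hρ]; apply div_nonneg <;> nlinarith
  have htail : ∑ k ∈ Icc j n, binomialTerm n p k ≤ binomialTerm n p j / s := by
    simpa only [sub_sub_cancel] using sum_Icc_le_div_one_sub_of_succ_le_mul hρ0 (by linarith)
      (binomialTerm_nonneg hp0.le hp1.le j)
      fun k hjk hk => hρ ▸ binomialTerm_succ_le hp0.le hp1 hj hjk hk
  calc ∑ k ∈ Icc j n, binomialTerm n p k ≤ binomialTerm n p j / s := htail
    _ ≤ binomialTerm n p j * (1 + 1 / s) := by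
        rw [div_eq_mul_one_div]
        gcongr
        · exact binomialTerm_nonneg hp0.le hp1.le j
        · linarith

theorem binomial_tail_geometric_bound (n j : ℕ) (p : ℝ)
    (hp : p ∈ Set.Ioo (0 : ℝ) 1) (hj : 0 < j) (hjn : j ≤ n)
    (hpnj : p * n < j) (s : ℝ) (hs : s = ((j : ℝ) - p * n) / ((j : ℝ) - p * j)) :
    ∑ k ∈ Finset.Icc j n, (n.choose k : ℝ) * p ^ k * (1 - p) ^ (n - k) ≤
      (n.choose j : ℝ) * p ^ j * (1 - p) ^ (n - j) * (1 + 1 / s) :=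
  binomial_tail_geometric_bound_general n j p hp hjn hpnj s hs
end

section
/- Fix integers n ≥ 2 and 1 < j ≤ n. The polynomial Q_j(x) = (j−1)·C(n−1,j−1)·x^{j−1} − ∑_{k=1}^{j−1} C(n−1,k−1)·x^{k−1} has exactly one positive real root; moreover Q_j is negative at x = 0 and tends to +∞ as x → ∞. -/
/-!
Write `Q x = c x^m - ∑_{k<m} a_k x^k` with `c > 0`, `a_k ≥ 0` and `a_0 > 0`. For `x > 0`,
`Q x = x^m (c - ∑_{k<m} a_k / x^(m-k))`, and the subtracted ratio is strictly decreasing on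
`(0, ∞)`, so `Q` has at most one positive root. Since `Q 0 = -a_0 < 0` and the ratio tends to `0`,
making `Q` tend to `+∞`, the intermediate value theorem supplies that root.
-/

open Filter Finset Topology

section LeadMinusLower

variable {a : ℕ → ℝ} {m : ℕ} {c : ℝ}

def leadMinusLower (c : ℝ) (a : ℕ → ℝ) (m : ℕ) (x : ℝ) : ℝ :=
  c * x ^ m - ∑ k ∈ range m, a k * x ^ k

noncomputable def lowerOrderRatio (a : ℕ → ℝ) (m : ℕ) (x : ℝ) : ℝ :=
  ∑ k ∈ range m, a k / x ^ (m - k)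

lemma leadMinusLower_eq_pow_mul {x : ℝ} (hx : x ≠ 0) :
    leadMinusLower c a m x = x ^ m * (c - lowerOrderRatio a m x) := by
  rw [leadMinusLower, lowerOrderRatio, mul_sub, mul_sum, mul_comm]
  congr 1
  refine sum_congr rfl fun k hk => ?_
  rw [← pow_sub_mul_pow x (mem_range.mp hk).le]
  field_simp

lemma leadMinusLower_zero (hm : m ≠ 0) : leadMinusLower c a m 0 = -a 0 := by
  obtain ⟨m, rfl⟩ := Nat.exists_eq_succ_of_ne_zero hm
  simp [leadMinusLower, sum_range_succ']

lemma continuous_leadMinusLower : Continuous (leadMinusLower c a m) := by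
  unfold leadMinusLower
  fun_prop

lemma lowerOrderRatio_strictAntiOn (ha : ∀ k, 0 ≤ a k) (ha₀ : 0 < a 0) (hm : m ≠ 0) :
    StrictAntiOn (lowerOrderRatio a m) (Set.Ioi 0) := by
  intro x hx y hy hxy
  refine sum_lt_sum (fun k _ => ?_) ⟨0, mem_range.mpr (Nat.pos_of_ne_zero hm), ?_⟩
  · exact div_le_div_of_nonneg_left (ha k) (pow_pos hx _) (pow_le_pow_left₀ hx.le hxy.le _)
  · exact div_lt_div_of_pos_left ha₀ (pow_pos hx _) (pow_lt_pow_left₀ hxy hx.le (by omega))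

lemma tendsto_lowerOrderRatio_atTop : Tendsto (lowerOrderRatio a m) atTop (𝓝 0) := by
  have hterm : ∀ k ∈ range m, Tendsto (fun x : ℝ => a k / x ^ (m - k)) atTop (𝓝 0) :=
    fun k hk => tendsto_const_nhds.div_atTop (tendsto_pow_atTop (by simp at hk; omega))
  unfold lowerOrderRatio
  simpa using tendsto_finsetSum (range m) hterm

lemma tendsto_leadMinusLower_atTop (hc : 0 < c) (hm : m ≠ 0) :
    Tendsto (leadMinusLower c a m) atTop atTop := by
  have hprod : Tendsto (fun x => x ^ m * (c - lowerOrderRatio a m x)) atTop atTop :=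
    (tendsto_pow_atTop hm).atTop_mul_pos (by simpa using hc)
      (by simpa using tendsto_lowerOrderRatio_atTop.const_sub c)
  refine hprod.congr' ?_
  filter_upwards [eventually_gt_atTop 0] with x hx
  exact (leadMinusLower_eq_pow_mul hx.ne').symm

lemma existsUnique_pos_leadMinusLower_eq_zero (hc : 0 < c) (ha : ∀ k, 0 ≤ a k)
    (ha₀ : 0 < a 0) (hm : m ≠ 0) : ∃! x : ℝ, 0 < x ∧ leadMinusLower c a m x = 0 := by
  obtain ⟨M, hM₀, hQM⟩ := ((eventually_ge_atTop 0).and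
    ((tendsto_leadMinusLower_atTop (a := a) hc hm).eventually_gt_atTop 0)).exists
  have h0 : (0 : ℝ) ∈ Set.Ioo (leadMinusLower c a m 0) (leadMinusLower c a m M) :=
    ⟨by rw [leadMinusLower_zero hm]; linarith, hQM⟩
  obtain ⟨x, ⟨hx, -⟩, hQx⟩ :=
    intermediate_value_Ioo hM₀ continuous_leadMinusLower.continuousOn h0
  have hroot : ∀ y : ℝ, 0 < y → leadMinusLower c a m y = 0 → lowerOrderRatio a m y = c :=
    fun y hy hQy => by
      rw [leadMinusLower_eq_pow_mul hy.ne'] at hQy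
      linarith [(mul_eq_zero.mp hQy).resolve_left (pow_ne_zero _ hy.ne')]
  refine ⟨x, ⟨hx, hQx⟩, fun y ⟨hy, hQy⟩ => ?_⟩
  exact (lowerOrderRatio_strictAntiOn ha ha₀ hm).injOn hy hx
    ((hroot y hy hQy).trans (hroot x hx hQx).symm)

end LeadMinusLower

theorem Q_unique_positive_root_general (n j : ℕ) (hj : 1 < j) (hjn : j ≤ n)
    (Q : ℝ → ℝ)
    (hQ : ∀ x : ℝ, Q x = ((j : ℝ) - 1) * ((n - 1).choose (j - 1) : ℝ) * x ^ (j - 1) -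
      ∑ k ∈ Finset.Icc 1 (j - 1), ((n - 1).choose (k - 1) : ℝ) * x ^ (k - 1)) :
    (∃! x : ℝ, 0 < x ∧ Q x = 0) ∧
    Q 0 < 0 ∧
    Filter.Tendsto Q Filter.atTop Filter.atTop := by
  set c : ℝ := ((j : ℝ) - 1) * ((n - 1).choose (j - 1) : ℝ)
  set a : ℕ → ℝ := fun k => ((n - 1).choose k : ℝ)
  have hQ_eq : Q = leadMinusLower c a (j - 1) := by
    ext x
    rw [hQ, leadMinusLower, show Icc 1 (j - 1) = Ico 1 j from rfl, sum_Ico_eq_sum_range]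
    simp [a, add_comm 1]
  have hm : j - 1 ≠ 0 := by omega
  have hc : 0 < c := mul_pos (by simp [Nat.one_lt_cast.mpr hj])
    (by exact_mod_cast Nat.choose_pos (by omega))
  have ha₀ : 0 < a 0 := by simp [a]
  rw [hQ_eq, leadMinusLower_zero hm]
  exact ⟨existsUnique_pos_leadMinusLower_eq_zero hc (fun k => by positivity) ha₀ hm,
    by linarith, tendsto_leadMinusLower_atTop hc hm⟩

theorem Q_unique_positive_root (n j : ℕ) (hn : 2 ≤ n) (hj : 1 < j) (hjn : j ≤ n)
    (Q : ℝ → ℝ)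
    (hQ : ∀ x : ℝ, Q x = ((j : ℝ) - 1) * ((n - 1).choose (j - 1) : ℝ) * x ^ (j - 1) -
      ∑ k ∈ Finset.Icc 1 (j - 1), ((n - 1).choose (k - 1) : ℝ) * x ^ (k - 1)) :
    (∃! x : ℝ, 0 < x ∧ Q x = 0) ∧
    Q 0 < 0 ∧
    Filter.Tendsto Q Filter.atTop Filter.atTop :=
  Q_unique_positive_root_general n j hj hjn Q hQ
end

section
/- Fix integers n ≥ 2 and 1 < j < n. Then Q_{j+1}(j/(n−j)) > 0, where Q_{j+1}(x) = j·C(n−1,j)·x^{j} − ∑_{k=1}^{j} C(n−1,k−1)·x^{k−1}. -/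
/-!
Put `x = j / (n - j)` and `a m = C(n-1, m) x^m`. Since `(m + 1) a (m+1) = (n - 1 - m) x · a m` and
`(n - 1 - m) x - (m + 1) = n (j - (m + 1)) / (n - j)`, the sequence `a` is nondecreasing up to
index `j` and strictly increasing at its first step (as `j > 1`). The sum in `Q x` consists of the
`j` terms `a 0, …, a (j-1)`, each at most `a j` and the first one strictly less, so it is below
`j · a j = j C(n-1, j) x^j`.
-/

open Finset

lemma choose_succ_mul_pow_succ_mul (N m : ℕ) (x : ℝ) :
    N.choose (m + 1) * x ^ (m + 1) * (m + 1) = N.choose m * x ^ m * ((N - m : ℕ) * x) := by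
  have h := congrArg (Nat.cast : ℕ → ℝ) (Nat.choose_succ_right_eq N m)
  push_cast at h
  linear_combination x ^ (m + 1) * h

lemma choose_mul_pow_le_succ {N m : ℕ} {x : ℝ} (hx : 0 ≤ x) (h : (m + 1 : ℝ) ≤ (N - m : ℕ) * x) :
    N.choose m * x ^ m ≤ N.choose (m + 1) * x ^ (m + 1) := by
  refine le_of_mul_le_mul_right ?_ (by positivity : (0 : ℝ) < m + 1)
  rw [choose_succ_mul_pow_succ_mul]
  exact mul_le_mul_of_nonneg_left h (by positivity)

lemma choose_mul_pow_lt_succ {N m : ℕ} {x : ℝ} (hmN : m ≤ N) (hx : 0 < x)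
    (h : (m + 1 : ℝ) < (N - m : ℕ) * x) :
    N.choose m * x ^ m < N.choose (m + 1) * x ^ (m + 1) := by
  refine lt_of_mul_lt_mul_right ?_ (by positivity : (0 : ℝ) ≤ m + 1)
  rw [choose_succ_mul_pow_succ_mul]
  have : (0 : ℝ) < N.choose m := by exact_mod_cast Nat.choose_pos hmN
  exact mul_lt_mul_of_pos_left h (by positivity)

lemma sub_one_sub_mul_div_sub_sub {n j m : ℕ} (hmn : m < n) (hjn : j < n) :
    ((n - 1 - m : ℕ) : ℝ) * (j / (n - j)) - (m + 1) = n * (j - (m + 1)) / (n - j) := by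
  have hnj : (n : ℝ) - j ≠ 0 := sub_ne_zero.mpr (by exact_mod_cast hjn.ne')
  rw [Nat.sub_sub, Nat.cast_sub (by omega)]
  field_simp
  push_cast
  ring

lemma choose_mul_pow_div_le_succ {n j m : ℕ} (hm : m < j) (hjn : j < n) :
    (n - 1).choose m * ((j : ℝ) / (n - j)) ^ m
      ≤ (n - 1).choose (m + 1) * ((j : ℝ) / (n - j)) ^ (m + 1) := by
  have hnj : (0 : ℝ) < n - j := sub_pos.mpr (by exact_mod_cast hjn)
  refine choose_mul_pow_le_succ (by positivity) (sub_nonneg.mp ?_)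
  rw [sub_one_sub_mul_div_sub_sub (hm.trans hjn) hjn]
  have : (m : ℝ) + 1 ≤ j := by exact_mod_cast hm
  exact div_nonneg (mul_nonneg (by positivity) (sub_nonneg.mpr this)) hnj.le

lemma choose_mul_pow_div_lt_succ {n j m : ℕ} (hm : m + 1 < j) (hjn : j < n) :
    (n - 1).choose m * ((j : ℝ) / (n - j)) ^ m
      < (n - 1).choose (m + 1) * ((j : ℝ) / (n - j)) ^ (m + 1) := by
  have hnj : (0 : ℝ) < n - j := sub_pos.mpr (by exact_mod_cast hjn)
  have hj : (0 : ℝ) < j := by exact_mod_cast (by omega : 0 < j)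
  refine choose_mul_pow_lt_succ (by omega) (div_pos hj hnj) (sub_pos.mp ?_)
  rw [sub_one_sub_mul_div_sub_sub (by omega) hjn]
  have hn : (0 : ℝ) < n := by exact_mod_cast (by omega : 0 < n)
  have : (m : ℝ) + 1 < j := by exact_mod_cast hm
  exact div_pos (mul_pos hn (sub_pos.mpr this)) hnj

theorem Q_succ_positive_general (n j : ℕ) (hj : 1 < j) (hjn : j < n)
    (Q : ℝ → ℝ)
    (hQ : ∀ x : ℝ, Q x = (j : ℝ) * ((n - 1).choose j : ℝ) * x ^ j -
      ∑ k ∈ Finset.Icc 1 j, ((n - 1).choose (k - 1) : ℝ) * x ^ (k - 1)) :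
    Q ((j : ℝ) / ((n : ℝ) - j)) > 0 := by
  set a : ℕ → ℝ := fun m ↦ (n - 1).choose m * ((j : ℝ) / (n - j)) ^ m
  have mono : MonotoneOn a (Set.Iic j) :=
    monotoneOn_of_le_add_one Set.ordConnected_Iic fun m _ _ hm ↦ choose_mul_pow_div_le_succ hm hjn
  have le_last (m : ℕ) (hm : m ≤ j) : a m ≤ a j := mono hm (Set.mem_Iic.mpr le_rfl) hm
  have first_lt_last : a 0 < a j :=
    (choose_mul_pow_div_lt_succ hj hjn).trans_le (le_last 1 hj.le)
  have hsum : ∑ k ∈ Icc 1 j, a (k - 1) < ∑ _k ∈ Icc 1 j, a j :=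
    sum_lt_sum (fun k hk ↦ le_last _ (by grind)) ⟨1, by grind, first_lt_last⟩
  rw [sum_const, Nat.card_Icc, add_tsub_cancel_right, nsmul_eq_mul] at hsum
  rw [hQ, gt_iff_lt, sub_pos, mul_assoc]
  exact hsum

theorem Q_succ_positive (n j : ℕ) (hn : 2 ≤ n) (hj : 1 < j) (hjn : j < n)
    (Q : ℝ → ℝ)
    (hQ : ∀ x : ℝ, Q x = (j : ℝ) * ((n - 1).choose j : ℝ) * x ^ j -
      ∑ k ∈ Finset.Icc 1 j, ((n - 1).choose (k - 1) : ℝ) * x ^ (k - 1)) :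
    Q ((j : ℝ) / ((n : ℝ) - j)) > 0 :=
  Q_succ_positive_general n j hj hjn Q hQ
end

section
/- Let V > c > 0, set R = V/c ≥ 7 and j = ⌊R − √R⌋, n an integer with n > 2R, and p = (R − √(5·R·ln R))/(n−1) (assume p > 0). Then ∑_{k=j+1}^{n} C(n−1,k−1)·p^{k−1}·(1−p)^{n−k} ≤ √(1/R). -/
/-!
Reindexing by `i = k - 1`, the sum is the upper tail `Pr[X ≥ j]` of `X ~ Bin(n - 1, p)`, whose
mean is `μ = R - √(5 R log R)`. Exponential moments give the Chernoff bound
`Pr[X ≥ j] ≤ exp (j - μ) (μ / j) ^ j`, and `-log (1 - x) ≥ x + x² / 2` turns this into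
`exp (-(j - μ)² / (2 j))`. Since `j > R - √R - 1`, the choice of `μ` makes `j - μ ≥ √(R log R)`
once `R ≥ 7`, so the exponent is at most `-(log R) / 2`.
-/

open Finset Real

lemma add_sq_div_two_le_neg_log_one_sub {x : ℝ} (hx₀ : 0 ≤ x) (hx₁ : x < 1) :
    x + x ^ 2 / 2 ≤ -log (1 - x) := by
  have h := sum_le_hasSum (range 2) (fun i _ => by positivity)
    (hasSum_pow_div_log_of_abs_lt_one (abs_lt.2 ⟨by linarith, hx₁⟩))
  norm_num [sum_range_succ] at h
  linarith

lemma sub_sub_mul_log_div_le {x y : ℝ} (hx : 0 < x) (hxy : x ≤ y) :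
    y - x - y * log (y / x) ≤ -(y - x) ^ 2 / (2 * y) := by
  have hy : 0 < y := hx.trans_le hxy
  have hw := add_sq_div_two_le_neg_log_one_sub (x := 1 - x / y)
    (by rw [sub_nonneg, div_le_one hy]; exact hxy) (by simp; positivity)
  rw [sub_sub_cancel, ← log_inv, inv_div] at hw
  have := mul_le_mul_of_nonneg_left hw hy.le
  field_simp at this ⊢
  linarith

theorem binomial_tail_le_exp_div_pow {p t : ℝ} (hp₀ : 0 ≤ p) (hp₁ : p ≤ 1) (ht : 1 ≤ t)
    (m j : ℕ) :
    ∑ i ∈ Icc j m, (m.choose i : ℝ) * p ^ i * (1 - p) ^ (m - i)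
      ≤ exp (m * p * (t - 1)) / t ^ j := by
  have hq : 0 ≤ 1 - p := by linarith
  rw [le_div_iff₀ (by positivity), sum_mul]
  calc ∑ i ∈ Icc j m, (m.choose i : ℝ) * p ^ i * (1 - p) ^ (m - i) * t ^ j
      ≤ ∑ i ∈ Icc j m, (p * t) ^ i * (1 - p) ^ (m - i) * m.choose i := by
        refine sum_le_sum fun i hi => ?_
        have := pow_le_pow_right₀ ht (mem_Icc.1 hi).1
        rw [mul_pow]
        have : 0 ≤ (m.choose i : ℝ) * p ^ i * (1 - p) ^ (m - i) := by positivity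
        nlinarith
    _ ≤ ∑ i ∈ range (m + 1), (p * t) ^ i * (1 - p) ^ (m - i) * m.choose i := by
        refine sum_le_sum_of_subset_of_nonneg (fun i hi => ?_) (fun i _ _ => by positivity)
        simpa [Nat.lt_succ_iff] using (mem_Icc.1 hi).2
    _ = (p * t + (1 - p)) ^ m := (add_pow _ _ _).symm
    _ ≤ exp (p * (t - 1)) ^ m := by
        gcongr
        linarith [add_one_le_exp (p * (t - 1))]
    _ = exp (m * p * (t - 1)) := by rw [← exp_nat_mul]; ring_nf

theorem binomial_tail_le_exp_neg_sq {m j : ℕ} {p : ℝ} (hp₁ : p ≤ 1) (hμ : 0 < m * p)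
    (hμj : m * p ≤ j) :
    ∑ i ∈ Icc j m, (m.choose i : ℝ) * p ^ i * (1 - p) ^ (m - i)
      ≤ exp (-(j - m * p) ^ 2 / (2 * j)) := by
  have hp₀ : 0 ≤ p := (pos_of_mul_pos_right hμ (Nat.cast_nonneg m)).le
  calc _ ≤ exp (m * p * (j / (m * p) - 1)) / (j / (m * p)) ^ j :=
        binomial_tail_le_exp_div_pow hp₀ hp₁ ((one_le_div hμ).2 hμj) m j
    _ = exp (j - m * p - j * log (j / (m * p))) := by
        rw [exp_sub, exp_nat_mul, exp_log (div_pos (hμ.trans_le hμj) hμ), mul_sub,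
          mul_div_cancel₀ _ hμ.ne', mul_one]
    _ ≤ exp (-(j - m * p) ^ 2 / (2 * j)) := exp_le_exp.2 (sub_sub_mul_log_div_le hμ hμj)

lemma sqrt_mul_log_add_sqrt_add_one_le {R : ℝ} (hR : 7 ≤ R) :
    √(R * log R) + √R + 1 ≤ √(5 * R * log R) := by
  have hlog : 1.38 ≤ log R := by
    have h4 : log 4 ≤ log R := log_le_log (by norm_num) (by linarith)
    rw [show (4 : ℝ) = 2 ^ 2 by norm_num, log_pow, Nat.cast_ofNat] at h4
    linarith [log_two_gt_d9]
  have hsplit : √(R * log R) = √R * √(log R) := sqrt_mul (by linarith) _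
  rw [show 5 * R * log R = 5 * (R * log R) by ring, sqrt_mul (by norm_num : (0 : ℝ) ≤ 5), hsplit]
  -- `(√5 - 1) √(log R) ≥ 1.23 · 1.17 > 1.43`, and `0.43 √R ≥ 0.43 · 2.64 > 1` absorbs the `+ 1`.
  have hR' : 2.64 ≤ √R := le_sqrt_of_sq_le (by linarith)
  have hlog' : 1.17 ≤ √(log R) := le_sqrt_of_sq_le (by linarith)
  have h5 : 2.23 ≤ √5 := le_sqrt_of_sq_le (by norm_num)
  nlinarith [mul_le_mul hR' hlog' (by norm_num) (sqrt_nonneg _),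
    mul_le_mul_of_nonneg_left h5 (mul_nonneg (sqrt_nonneg R) (sqrt_nonneg (log R)))]

lemma sqrt_mul_log_le_floor_sub {R : ℝ} (hR : 7 ≤ R) :
    √(R * log R) ≤ ⌊R - √R⌋₊ - (R - √(5 * R * log R)) := by
  linarith [Nat.sub_one_lt_floor (R - √R), sqrt_mul_log_add_sqrt_add_one_le hR]

lemma floor_mul_log_le_sq {R : ℝ} (hR : 7 ≤ R) :
    ⌊R - √R⌋₊ * log R ≤ (⌊R - √R⌋₊ - (R - √(5 * R * log R))) ^ 2 :=
  have hfloor : (⌊R - √R⌋₊ : ℝ) ≤ R := (Nat.floor_le (sub_nonneg.2 (sqrt_le_self_iff.2 (.inr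
    (by linarith))))).trans (sub_le_self _ (sqrt_nonneg R))
  have hlog : 0 ≤ log R := log_nonneg (by linarith)
  calc ⌊R - √R⌋₊ * log R ≤ R * log R := by gcongr
    _ = √(R * log R) ^ 2 := (sq_sqrt (mul_nonneg (by linarith) hlog)).symm
    _ ≤ _ := pow_le_pow_left₀ (sqrt_nonneg _) (sqrt_mul_log_le_floor_sub hR) 2

lemma sum_Icc_succ_choose_pred (p : ℝ) (j m : ℕ) :
    ∑ k ∈ Icc (j + 1) (m + 1), (m.choose (k - 1) : ℝ) * p ^ (k - 1) * (1 - p) ^ (m + 1 - k)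
      = ∑ i ∈ Icc j m, (m.choose i : ℝ) * p ^ i * (1 - p) ^ (m - i) := by
  rw [← map_add_right_Icc, sum_map]
  simp only [addRightEmbedding_apply, Nat.add_sub_cancel, Nat.add_sub_add_right]

theorem chernoff_tail_bound_general (R : ℝ) (hR7 : 7 ≤ R)
    (j : ℕ) (hj : j = ⌊R - Real.sqrt R⌋₊)
    (n : ℕ) (hn : 2 * R < n)
    (p : ℝ) (hp : p = (R - Real.sqrt (5 * R * Real.log R)) / ((n : ℝ) - 1))
    (hp0 : 0 < p) :
    ∑ k ∈ Finset.Icc (j + 1) n,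
        ((n - 1).choose (k - 1) : ℝ) * p ^ (k - 1) * (1 - p) ^ (n - k)
      ≤ Real.sqrt (1 / R) := by
  have hn₀ : 0 < n := by exact_mod_cast (by linarith : (0 : ℝ) < n)
  obtain ⟨m, rfl⟩ : ∃ m, n = m + 1 := ⟨n - 1, by omega⟩
  push_cast at hn hp
  rw [Nat.add_sub_cancel, sum_Icc_succ_choose_pred]
  have hm : (0 : ℝ) < m := by linarith
  have hμ : m * p = R - √(5 * R * log R) := by
    rw [hp, add_sub_cancel_right, mul_div_cancel₀ _ hm.ne']
  have hgap : √(R * log R) ≤ j - m * p := hμ ▸ hj ▸ sqrt_mul_log_le_floor_sub hR7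
  have hμ₀ : 0 < m * p := mul_pos hm hp0
  have hp₁ : p ≤ 1 := (mul_le_iff_le_one_right hm).1 (by linarith [sqrt_nonneg (5 * R * log R)])
  have hsq : j * log R ≤ (j - m * p) ^ 2 := hμ ▸ hj ▸ floor_mul_log_le_sq hR7
  have hμj : m * p ≤ j := by linarith [sqrt_nonneg (R * log R)]
  have hj₀ : (0 : ℝ) < j := hμ₀.trans_le hμj
  calc _ ≤ exp (-(j - m * p) ^ 2 / (2 * j)) := binomial_tail_le_exp_neg_sq hp₁ hμ₀ hμj
    _ ≤ exp (-log R / 2) := by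
        rw [exp_le_exp, neg_div, neg_div, neg_le_neg_iff, div_le_div_iff₀ two_pos (by positivity)]
        linarith
    _ = √(1 / R) := by
        rw [sqrt_eq_rpow, rpow_def_of_pos (by positivity), one_div, log_inv]
        ring_nf

theorem chernoff_tail_bound (V c : ℝ) (hc : 0 < c) (hcV : c < V)
    (R : ℝ) (hR : R = V / c) (hR7 : 7 ≤ R)
    (j : ℕ) (hj : j = ⌊R - Real.sqrt R⌋₊)
    (n : ℕ) (hn : 2 * R < n)
    (p : ℝ) (hp : p = (R - Real.sqrt (5 * R * Real.log R)) / ((n : ℝ) - 1))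
    (hp0 : 0 < p) :
    ∑ k ∈ Finset.Icc (j + 1) n,
        ((n - 1).choose (k - 1) : ℝ) * p ^ (k - 1) * (1 - p) ^ (n - k)
      ≤ Real.sqrt (1 / R) :=
  chernoff_tail_bound_general R hR7 j hj n hn p hp hp0
end

section
/- Let n ≥ 2, p ∈ (0,1), and let j* maximize over j ∈ {1,…,n} the quantity y_j = (1/j)·∑_{k=1}^{j} C(n−1,k−1)·p^{k−1}·(1−p)^{n−k}. If j* ≤ n/2 then j* > p(n−1) + (1/2)·√(p(n−1)·max{0, ln(p(n−1)/16)}). -/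
open Finset Real
open scoped Nat

/-!
With `N = n - 1`, the summands are the binomial probabilities `b i = P(Bin(N, p) = i)` at
`i = k - 1`, so `y j` is the mean of the first `j` of them. Appending a term raises a running mean
exactly when the term exceeds it. The `b i` increase as long as `i < (N + 1) p`, so optimality
forces `j* ≥ p n > p N`; it also gives `b j* ≤ y j* ≤ 1 / j*`, and with `j* ≤ n / 2` it gives
`p ≤ 1/2`. On the other hand, Stirling's formula and `log x ≥ 1 - 1 / x` give
`b j ≥ (1/4) j^(-1/2) exp(-(j - pN)² / (p (1 - p) N)) ≥ (1/4) j^(-1/2) exp(-2 (j - pN)² / (pN))`.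
If `j* - pN ≤ √(pN log(pN/16)) / 2`, the exponential is at least `4 / √(pN)`, so
`j* b j* ≥ √(j* / (pN)) > 1`, a contradiction.
-/

noncomputable def runningMean (x : ℕ → ℝ) (j : ℕ) : ℝ := (∑ i ∈ range j, x i) / j

lemma runningMean_succ_le_iff (x : ℕ → ℝ) {j : ℕ} (hj : j ≠ 0) :
    runningMean x (j + 1) ≤ runningMean x j ↔ x j ≤ runningMean x j := by
  have hjpos : (0 : ℝ) < j := by positivity
  unfold runningMean
  rw [sum_range_succ, Nat.cast_succ, div_le_div_iff₀ (by positivity) hjpos, le_div_iff₀ hjpos]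
  constructor <;> intro h <;> linarith

lemma runningMean_lt_of_forall_lt {x : ℕ → ℝ} {j : ℕ} {c : ℝ} (hj : j ≠ 0)
    (h : ∀ i < j, x i < c) : runningMean x j < c := by
  have hsum : ∑ i ∈ range j, x i < ∑ _i ∈ range j, c :=
    sum_lt_sum_of_nonempty (nonempty_range_iff.mpr hj) fun i hi => h i (mem_range.mp hi)
  rw [sum_const, card_range, nsmul_eq_mul] at hsum
  rw [runningMean, div_lt_iff₀ (by positivity)]
  linarith

def binomialWeight (N : ℕ) (p : ℝ) (i : ℕ) : ℝ := N.choose i * p ^ i * (1 - p) ^ (N - i)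

section binomialWeight

variable {N : ℕ} {p : ℝ}

lemma binomialWeight_nonneg (hp0 : 0 ≤ p) (hp1 : p ≤ 1) (i : ℕ) :
    0 ≤ binomialWeight N p i := by
  have : 0 ≤ 1 - p := by linarith
  unfold binomialWeight
  positivity

lemma sum_range_binomialWeight : ∑ i ∈ range (N + 1), binomialWeight N p i = 1 := by
  have := (add_pow p (1 - p) N).symm
  rw [add_sub_cancel, one_pow] at this
  exact (sum_congr rfl fun i _ => by rw [binomialWeight]; ring).trans this

lemma sum_range_binomialWeight_le_one (hp0 : 0 ≤ p) (hp1 : p ≤ 1) {j : ℕ} (hj : j ≤ N + 1) :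
    ∑ i ∈ range j, binomialWeight N p i ≤ 1 :=
  (sum_le_sum_of_subset_of_nonneg (range_mono hj) fun i _ _ =>
    binomialWeight_nonneg hp0 hp1 i).trans sum_range_binomialWeight.le

lemma binomialWeight_lt_succ (hp0 : 0 < p) (hp1 : p < 1) {i : ℕ}
    (hi : (i + 1 : ℝ) < (N + 1) * p) : binomialWeight N p i < binomialWeight N p (i + 1) := by
  have hiN : i < N := by exact_mod_cast (show (i : ℝ) < N by nlinarith)
  obtain ⟨r, rfl⟩ : ∃ r, N = i + 1 + r := ⟨N - (i + 1), by omega⟩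
  have hchoose : ((i + 1 + r).choose (i + 1) : ℝ) * (i + 1) = (i + 1 + r).choose i * (r + 1) := by
    have := Nat.choose_succ_right_eq (i + 1 + r) i
    rw [show i + 1 + r - i = r + 1 by omega] at this
    exact_mod_cast this
  have hc : 0 < ((i + 1 + r).choose i : ℝ) * p ^ i * (1 - p) ^ r := by
    have := Nat.choose_pos (show i ≤ i + 1 + r by omega)
    have : 0 < 1 - p := by linarith
    positivity
  have hratio : (i + 1 : ℝ) * (1 - p) < (r + 1) * p := by push_cast at hi; linarith
  rw [← mul_lt_mul_iff_right₀ (show (0 : ℝ) < i + 1 by positivity)]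
  calc (i + 1 : ℝ) * binomialWeight (i + 1 + r) p i
      = ((i + 1 + r).choose i * p ^ i * (1 - p) ^ r) * ((i + 1) * (1 - p)) := by
        simp only [binomialWeight, show i + 1 + r - i = r + 1 by omega]; ring
    _ < ((i + 1 + r).choose i * p ^ i * (1 - p) ^ r) * ((r + 1) * p) :=
        mul_lt_mul_of_pos_left hratio hc
    _ = (i + 1 : ℝ) * binomialWeight (i + 1 + r) p (i + 1) := by
        simp only [binomialWeight, show i + 1 + r - (i + 1) = r by omega]
        linear_combination (-(p ^ (i + 1) * (1 - p) ^ r)) * hchoose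

lemma binomialWeight_lt_of_lt (hp0 : 0 < p) (hp1 : p < 1) {i j : ℕ} (hij : i < j)
    (hj : (j : ℝ) < (N + 1) * p) : binomialWeight N p i < binomialWeight N p j :=
  strictMonoOn_Iic_of_lt_succ (fun k hk => by
      rw [Order.succ_eq_add_one]
      refine binomialWeight_lt_succ hp0 hp1 (lt_of_le_of_lt ?_ hj)
      exact_mod_cast hk)
    hij.le le_rfl hij

lemma le_of_runningMean_binomialWeight_succ_le (hp0 : 0 < p) (hp1 : p < 1) {j : ℕ} (hj : j ≠ 0)
    (h : runningMean (binomialWeight N p) (j + 1) ≤ runningMean (binomialWeight N p) j) :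
    (N + 1) * p ≤ j := by
  rw [runningMean_succ_le_iff _ hj] at h
  by_contra! hlt
  exact h.not_gt (runningMean_lt_of_forall_lt hj fun i hi => binomialWeight_lt_of_lt hp0 hp1 hi hlt)

lemma mul_binomialWeight_le_one_of_runningMean_succ_le (hp0 : 0 ≤ p) (hp1 : p ≤ 1) {j : ℕ}
    (hj : j ≠ 0) (hjN : j ≤ N + 1)
    (h : runningMean (binomialWeight N p) (j + 1) ≤ runningMean (binomialWeight N p) j) :
    j * binomialWeight N p j ≤ 1 := by
  rw [runningMean_succ_le_iff _ hj, runningMean, le_div_iff₀ (by positivity)] at h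
  linarith [sum_range_binomialWeight_le_one hp0 hp1 hjN]

end binomialWeight

lemma factorial_le_exp_one_mul_sqrt_mul_pow {k : ℕ} (hk : k ≠ 0) :
    (k ! : ℝ) ≤ exp 1 * √k * (k / exp 1) ^ k := by
  obtain ⟨m, rfl⟩ := Nat.exists_eq_succ_of_ne_zero hk
  have h : Stirling.stirlingSeq (m + 1) ≤ exp 1 / √2 :=
    Stirling.stirlingSeq_one ▸ Stirling.stirlingSeq'_antitone (Nat.zero_le m)
  rw [Stirling.stirlingSeq, div_le_iff₀ (by positivity)] at h
  calc ((m + 1)! : ℝ) ≤ _ := h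
    _ = _ := by rw [sqrt_mul' _ (by positivity)]; field_simp

lemma choose_add_ge {j b : ℕ} (hj : j ≠ 0) (hb : b ≠ 0) :
    1 / 4 / √j * (((j + b : ℕ) / j) ^ j * ((j + b : ℕ) / b) ^ b) ≤
      ((j + b).choose j : ℝ) := by
  set N := j + b with hN
  have hfac : ((N.choose j : ℝ) * (j ! * b !)) = N ! := by
    have := Nat.choose_mul_factorial_mul_factorial (Nat.le_add_right j b)
    rw [← hN, show N - j = b by omega] at this
    rw [← mul_assoc]; exact_mod_cast this
  have hconst : exp 1 ^ 2 / 4 ≤ √(2 * π) := by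
    rw [le_sqrt (by positivity) (by positivity)]
    have he : exp 1 ^ 4 < 2.7182818286 ^ 4 := by gcongr; exact exp_one_lt_d9
    nlinarith [pi_gt_three]
  have hpow (k : ℕ) (hk : k ≠ 0) : ((N : ℝ) / k) ^ k * (k / exp 1) ^ k = (N / exp 1) ^ k := by
    rw [← mul_pow, div_mul_div_cancel₀ (by positivity)]
  refine le_of_mul_le_mul_right ?_ (by positivity : (0 : ℝ) < j ! * (b !))
  calc 1 / 4 / √j * ((N / j) ^ j * (N / b) ^ b) * (j ! * b !)
      ≤ 1 / 4 / √j * ((N / j) ^ j * (N / b) ^ b) *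
          ((exp 1 * √j * (j / exp 1) ^ j) * (exp 1 * √b * (b / exp 1) ^ b)) := by
        gcongr <;> exact factorial_le_exp_one_mul_sqrt_mul_pow ‹_›
    _ = exp 1 ^ 2 / 4 * √b *
          (((N / j) ^ j * (j / exp 1) ^ j) * ((N / b) ^ b * (b / exp 1) ^ b)) := by
        field_simp
    _ = exp 1 ^ 2 / 4 * √b * (N / exp 1) ^ N := by rw [hpow j hj, hpow b hb, ← pow_add]
    _ ≤ √(2 * π) * √N * (N / exp 1) ^ N := by gcongr; simp [hN]
    _ ≤ N ! := by rw [← sqrt_mul (by positivity)]; exact Stirling.le_factorial_stirling N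
    _ = N.choose j * (j ! * b !) := hfac.symm

lemma exp_sub_sq_div_le_div_pow (t : ℕ) {a : ℝ} (ha : 0 < a) :
    exp (t - t ^ 2 / a) ≤ (a / t) ^ t := by
  rcases eq_or_ne t 0 with rfl | ht
  · simp
  have hlog : 1 - t / a ≤ log (a / t) := by
    simpa using one_sub_inv_le_log_of_pos (show 0 < a / t by positivity)
  calc exp (t - t ^ 2 / a) = exp (t * (1 - t / a)) := by congr 1; field_simp
    _ ≤ exp (t * log (a / t)) := by gcongr
    _ = (a / t) ^ t := by rw [← Real.log_pow, exp_log (by positivity)]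

lemma exp_neg_sq_div_le_pow_mul_pow {p : ℝ} (hp0 : 0 < p) (hp1 : p < 1) {j b : ℕ}
    (hjb : j + b ≠ 0) :
    exp (-(j - p * (j + b : ℕ)) ^ 2 / (p * (1 - p) * (j + b : ℕ))) ≤
      (p * (j + b : ℕ) / j) ^ j * ((1 - p) * (j + b : ℕ) / b) ^ b := by
  have hq : 0 < 1 - p := by linarith
  have hN : (0 : ℝ) < (j + b : ℕ) := by positivity
  calc exp (-(j - p * (j + b : ℕ)) ^ 2 / (p * (1 - p) * (j + b : ℕ)))
      = exp (j - j ^ 2 / (p * (j + b : ℕ))) * exp (b - b ^ 2 / ((1 - p) * (j + b : ℕ))) := by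
        rw [← exp_add]; congr 1; push_cast at hN ⊢; field_simp; ring
    _ ≤ _ := by gcongr <;> exact exp_sub_sq_div_le_div_pow _ (by positivity)

lemma binomialWeight_add_ge {p : ℝ} (hp0 : 0 < p) (hp1 : p < 1) {j b : ℕ} (hj : j ≠ 0)
    (hb : b ≠ 0) :
    1 / 4 / √j * exp (-(j - p * (j + b : ℕ)) ^ 2 / (p * (1 - p) * (j + b : ℕ))) ≤
      binomialWeight (j + b) p j := by
  have hq : 0 < 1 - p := by linarith
  calc 1 / 4 / √j * exp (-(j - p * (j + b : ℕ)) ^ 2 / (p * (1 - p) * (j + b : ℕ)))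
      ≤ 1 / 4 / √j * ((p * (j + b : ℕ) / j) ^ j * ((1 - p) * (j + b : ℕ) / b) ^ b) := by
        gcongr; exact exp_neg_sq_div_le_pow_mul_pow hp0 hp1 (by omega)
    _ = 1 / 4 / √j * (((j + b : ℕ) / j) ^ j * ((j + b : ℕ) / b) ^ b) *
          (p ^ j * (1 - p) ^ b) := by
        simp only [mul_div_assoc, mul_pow]; ring
    _ ≤ (j + b).choose j * (p ^ j * (1 - p) ^ b) := by gcongr; exact choose_add_ge hj hb
    _ = binomialWeight (j + b) p j := by
        rw [binomialWeight, Nat.add_sub_cancel_left, mul_assoc]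

lemma one_lt_mul_binomialWeight {N j : ℕ} {p : ℝ} (hp0 : 0 < p) (hp : p ≤ 1 / 2) (hjN : j < N)
    (hmj : p * N < j) (hdev : (j - p * N) ^ 2 ≤ p * N * log (p * N / 16) / 4) :
    1 < j * binomialWeight N p j := by
  obtain ⟨b, rfl⟩ : ∃ b, N = j + (b + 1) := ⟨N - j - 1, by omega⟩
  set m := p * ((j + (b + 1) : ℕ) : ℝ)
  have hm0 : 0 < m := by positivity
  have hj : 0 < (j : ℝ) := hm0.trans hmj
  have hexp : 4 / √m ≤ exp (-(j - m) ^ 2 / (p * (1 - p) * (j + (b + 1) : ℕ))) :=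
    calc 4 / √m = exp (-(log (m / 16) / 2)) := by
          have h16 : √16 = 4 := by
            rw [show (16 : ℝ) = 4 ^ 2 by norm_num, sqrt_sq (by norm_num)]
          rw [exp_neg, exp_half, exp_log (by positivity), sqrt_div' _ (by norm_num), h16, inv_div]
      _ ≤ exp (-(2 * (j - m) ^ 2 / m)) := by
          refine exp_le_exp.2 (neg_le_neg ?_)
          rw [div_le_div_iff₀ hm0 two_pos]
          linarith
      _ ≤ exp (-(j - m) ^ 2 / (p * (1 - p) * (j + (b + 1) : ℕ))) := by
          rw [show p * (1 - p) * ((j + (b + 1) : ℕ) : ℝ) = m * (1 - p) by ring, neg_div]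
          refine exp_le_exp.2 (neg_le_neg ?_)
          rw [div_le_div_iff₀ (by nlinarith) hm0]
          nlinarith [mul_nonneg (mul_nonneg (sq_nonneg ((j : ℝ) - m)) hm0.le)
            (show 0 ≤ 1 - 2 * p by linarith)]
  calc 1 < √j / √m := (one_lt_div (sqrt_pos.2 hm0)).2 (sqrt_lt_sqrt hm0.le hmj)
    _ = j * (1 / 4 / √j * (4 / √m)) := by
        field_simp
        rw [sq_sqrt hj.le]
    _ ≤ j * (1 / 4 / √j * exp (-(j - m) ^ 2 / (p * (1 - p) * (j + (b + 1) : ℕ)))) := by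
        gcongr
    _ ≤ j * binomialWeight (j + (b + 1)) p j := by
        gcongr
        exact binomialWeight_add_ge hp0 (by linarith) (by exact_mod_cast hj.ne') (by omega)

lemma sum_Icc_choose_eq_sum_range_binomialWeight (n j : ℕ) (p : ℝ) :
    ∑ k ∈ Icc 1 j, ((n - 1).choose (k - 1) : ℝ) * p ^ (k - 1) * (1 - p) ^ (n - k) =
      ∑ i ∈ range j, binomialWeight (n - 1) p i := by
  rw [← Ico_add_one_right_eq_Icc, sum_Ico_eq_sum_range, add_tsub_cancel_right]
  refine sum_congr rfl fun i _ => ?_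
  rw [binomialWeight, add_tsub_cancel_left, Nat.sub_sub, add_comm 1 i]

theorem optimal_prize_count_lower_bound_general (n : ℕ)
    (p : ℝ) (hp : p ∈ Set.Ioo (0 : ℝ) 1)
    (y : ℕ → ℝ)
    (hy : ∀ j : ℕ, y j = (1 / (j : ℝ)) * ∑ k ∈ Finset.Icc 1 j,
      ((n - 1).choose (k - 1) : ℝ) * p ^ (k - 1) * (1 - p) ^ (n - k))
    (jstar : ℕ) (hmem : jstar ∈ Finset.Icc 1 n)
    (hmax : ∀ j ∈ Finset.Icc 1 n, y j ≤ y jstar)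
    (hhalf : (jstar : ℝ) ≤ n / 2) :
    (jstar : ℝ) > p * ((n : ℝ) - 1) +
      (1/2) * Real.sqrt (p * ((n : ℝ) - 1) *
        max 0 (Real.log (p * ((n : ℝ) - 1) / 16))) := by
  obtain ⟨hp0, hp1⟩ := hp
  obtain ⟨hj1, hjn⟩ := mem_Icc.mp hmem
  have hcast : ((n - 1 : ℕ) : ℝ) = n - 1 := by rw [Nat.cast_sub (by omega), Nat.cast_one]
  have hmean (j : ℕ) : y j = runningMean (binomialWeight (n - 1) p) j := by
    rw [hy, sum_Icc_choose_eq_sum_range_binomialWeight, runningMean, one_div_mul_eq_div]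
  have hsucc : runningMean (binomialWeight (n - 1) p) (jstar + 1) ≤
      runningMean (binomialWeight (n - 1) p) jstar := by
    have hjn' : (jstar + 1 : ℝ) ≤ n := by linarith [(Nat.one_le_cast (α := ℝ)).2 hj1]
    simpa only [hmean] using hmax (jstar + 1) (mem_Icc.mpr ⟨by omega, by exact_mod_cast hjn'⟩)
  have hpn := le_of_runningMean_binomialWeight_succ_le hp0 hp1 (by omega) hsucc
  rw [hcast, sub_add_cancel] at hpn
  have hmul := mul_binomialWeight_le_one_of_runningMean_succ_le hp0.le hp1.le (by omega) (by omega)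
    hsucc
  rw [gt_iff_lt, ← hcast]
  set m := p * ((n - 1 : ℕ) : ℝ) with hm_def
  have hm : m < jstar := by rw [hm_def, hcast]; linarith
  rcases le_or_gt (log (m / 16)) 0 with hL | hL
  · rwa [max_eq_left hL, mul_zero, sqrt_zero, mul_zero, add_zero]
  rw [max_eq_right hL.le]
  by_contra! hle
  have h16 : 16 < m := by linarith [(log_pos_iff (by positivity)).1 hL]
  refine hmul.not_gt (one_lt_mul_binomialWeight hp0 (by nlinarith) ?_ hm ?_)
  · have hN : (16 : ℝ) < n - 1 := by rw [← hcast]; nlinarith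
    exact_mod_cast (show (jstar : ℝ) < (n - 1 : ℕ) by rw [hcast]; linarith)
  · have hdev : 2 * (jstar - m) ≤ √(m * log (m / 16)) := by linarith
    linarith [(le_sqrt (by linarith) (by positivity)).1 hdev]

theorem optimal_prize_count_lower_bound (n : ℕ) (hn : 2 ≤ n)
    (p : ℝ) (hp : p ∈ Set.Ioo (0 : ℝ) 1)
    (y : ℕ → ℝ)
    (hy : ∀ j : ℕ, y j = (1 / (j : ℝ)) * ∑ k ∈ Finset.Icc 1 j,
      ((n - 1).choose (k - 1) : ℝ) * p ^ (k - 1) * (1 - p) ^ (n - k))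
    (jstar : ℕ) (hmem : jstar ∈ Finset.Icc 1 n)
    (hmax : ∀ j ∈ Finset.Icc 1 n, y j ≤ y jstar)
    (hhalf : (jstar : ℝ) ≤ n / 2) :
    (jstar : ℝ) > p * ((n : ℝ) - 1) +
      (1/2) * Real.sqrt (p * ((n : ℝ) - 1) *
        max 0 (Real.log (p * ((n : ℝ) - 1) / 16))) :=
  optimal_prize_count_lower_bound_general n p hp y hy jstar hmem hmax hhalf
end
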